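/- arXiv:2503.14337 — 9 statements merged into one kernel-verified Lean document; each statement's English description precedes it below -/
import Mathlib

section
/- Let s be a state function for the next-token generator π. Then for every k ≥ 0 and every token sequence x, s (f_π^k (s x)) = s (f_π^k x); i.e., s ∘ f_π^k ∘ s = s ∘ f_π^k. -/
/-- Let `s` be a state function for the next-token generator `π`
(with one-step extension `f_π x = x ++ [π x]` and `f_π^[k]` its `k`-fold iterate).
Then for every `k ≥ 0` and every token sequence `x`,
`s (f_π^[k] (s x)) = s (f_π^[k] x)`. -/
theorem state_function_iterate {α : Type*} (π : List α → α) (s : List α → List α)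
    (h₁ : ∀ x, π (s x) = π x)
    (h₂ : ∀ x x' y, s x = s x' → s (x ++ y) = s (x' ++ y))
    (h₃ : ∀ x, s (s x) = s x) :
    ∀ (k : ℕ) (x : List α),
      s ((fun y => y ++ [π y])^[k] (s x)) = s ((fun y => y ++ [π y])^[k] x) := by
  have key : ∀ (k : ℕ) (x x' : List α), s x = s x' →
      s ((fun y => y ++ [π y])^[k] x) = s ((fun y => y ++ [π y])^[k] x') := by
    intro k
    induction k with
    | zero => intro x x' h; simpa using h
    | succ k ih =>
      intro x x' h
      rw [Function.iterate_succ_apply, Function.iterate_succ_apply]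
      apply ih
      have hπ : π x = π x' := by rw [← h₁ x, ← h₁ x', h]
      show s (x ++ [π x]) = s (x' ++ [π x'])
      rw [hπ]
      exact h₂ x x' [π x'] h
  intro k x
  exact key k (s x) x (h₃ x)
end

section
/- Let s be a state function for the next-token generator π. Then for every k ≥ 0 and every token sequence x, π (f_π^k (s x)) = π (f_π^k x); i.e., the future next-token predictions of the machine are unchanged when the input sequence is replaced by its state. -/
/-- Let `s` be a state function for the next-token generator `π`
(with one-step extension `f_π x = x ++ [π x]` and `f_π^[k]` its `k`-fold iterate).
Then for every `k ≥ 0` and every token sequence `x`,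
`π (f_π^[k] (s x)) = π (f_π^[k] x)`: the future next-token predictions are
unchanged when the input sequence is replaced by its state. -/
theorem state_function_future_predictions {α : Type*} (π : List α → α)
    (s : List α → List α)
    (h₁ : ∀ x, π (s x) = π x)
    (h₂ : ∀ x x' y, s x = s x' → s (x ++ y) = s (x' ++ y))
    (h₃ : ∀ x, s (s x) = s x) :
    ∀ (k : ℕ) (x : List α),
      π ((fun y => y ++ [π y])^[k] (s x)) = π ((fun y => y ++ [π y])^[k] x) := by
  intro k x
  have key : ∀ k x, s ((fun y => y ++ [π y])^[k] (s x)) = s ((fun y => y ++ [π y])^[k] x) := by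
    intro k
    induction k with
    | zero => intro x; simpa using h₃ x
    | succ n ih =>
      intro x
      rw [Function.iterate_succ_apply', Function.iterate_succ_apply']
      have hπ : π ((fun y => y ++ [π y])^[n] (s x)) = π ((fun y => y ++ [π y])^[n] x) := by
        calc π ((fun y => y ++ [π y])^[n] (s x))
            = π (s ((fun y => y ++ [π y])^[n] (s x))) := (h₁ _).symm
          _ = π (s ((fun y => y ++ [π y])^[n] x)) := by rw [ih x]
          _ = π ((fun y => y ++ [π y])^[n] x) := h₁ _
      simp only [hπ]
      exact h₂ _ _ _ (ih x)
  calc π ((fun y => y ++ [π y])^[k] (s x))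
      = π (s ((fun y => y ++ [π y])^[k] (s x))) := (h₁ _).symm
    _ = π (s ((fun y => y ++ [π y])^[k] x)) := by rw [key]
    _ = π ((fun y => y ++ [π y])^[k] x) := h₁ _
end

section
/- For every embeddable Turing-machine configuration c, applying the token sequence embed(c) to the all-blank initial configuration recovers c up to translation: Update(c₀, embed(c)) ∼ c, where c₀ = (q₀, (fun _ ↦ b), 0). -/
variable {Q A : Type*}

/-- A Turing machine configuration: control state, tape contents, head position. -/
abbrev Config (Q A : Type*) := Q × (ℤ → A) × ℤ

/-- The transition function extended to configurations:
`δ(q, σ, p) := δ(q, σ p)`. -/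
def extDelta (δ : Q → A → Q × A × ℤ) (c : Config Q A) : Q × A × ℤ :=
  δ c.1 (c.2.1 c.2.2)

/-- Update of a configuration by a token `(q', a, d)`:
`Update((q,σ,p), (q',a,d)) = (q', σ[p ↦ a], p + d)`. -/
def Update (c : Config Q A) (x : Q × A × ℤ) : Config Q A :=
  (x.1, Function.update c.2.1 c.2.2 x.2.1, c.2.2 + x.2.2)

/-- Update extended to finite token sequences by left-to-right folding. -/
def UpdateSeq (c : Config Q A) (xs : List (Q × A × ℤ)) : Config Q A :=
  xs.foldl Update c

/-- One step of the Turing machine on configurations: `g_δ(c) = Update(c, δ(c))`. -/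
def gStep (δ : Q → A → Q × A × ℤ) (c : Config Q A) : Config Q A :=
  Update c (extDelta δ c)

/-- Translational equivalence of Turing machine configurations. -/
def TransEquiv (c₁ c₂ : Config Q A) : Prop :=
  c₁.1 = c₂.1 ∧
    ∃ k : ℤ, (∀ i : ℤ, c₁.2.1 i = c₂.2.1 (i - k)) ∧ c₁.2.2 = c₂.2.2 + k

/-- Position of the rightmost non-blank symbol on the tape. -/
noncomputable def maxPos (b : A) (σ : ℤ → A) : ℤ := sSup {j : ℤ | σ j ≠ b}

/-- Position of the leftmost non-blank symbol on the tape. -/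
noncomputable def minPos (b : A) (σ : ℤ → A) : ℤ := sInf {j : ℤ | σ j ≠ b}

/-- A configuration is embeddable if the set of non-blank positions is finite and
nonempty and the head position satisfies `min_pos − 1 ≤ p ≤ max_pos + 1`. -/
def Embeddable (b : A) (c : Config Q A) : Prop :=
  {j : ℤ | c.2.1 j ≠ b}.Finite ∧ {j : ℤ | c.2.1 j ≠ b}.Nonempty ∧
    minPos b c.2.1 - 1 ≤ c.2.2 ∧ c.2.2 ≤ maxPos b c.2.1 + 1

/-- The move `d_i` of the `i`-th token (1-indexed) of the embedding, given the
leftmost non-blank position `l`, rightmost non-blank position `m`, and head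
position `p`:  `d_i = +1` for `1 ≤ i ≤ m − l`; at `i = m − l + 1` it is `+1` if
`p = m + 1`, `0` if `p = m`, and `−1` if `p ≤ m − 1`; and `d_i = −1` afterwards. -/
def moveAt (l m p : ℤ) (i : ℕ) : ℤ :=
  if (i : ℤ) ≤ m - l then 1
  else if (i : ℤ) = m - l + 1 then
    (if p = m + 1 then 1 else if p = m then 0 else -1)
  else -1

/-- The tape position read by the `i`-th token (1-indexed) of the embedding:
`min_pos + ∑_{j=1}^{i−1} d_j`. -/
def posAt (l m p : ℤ) (i : ℕ) : ℤ :=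
  l + ∑ j ∈ Finset.range (i - 1), moveAt l m p (j + 1)

/-- Length of the embedding:
`n = (max_pos − min_pos) + max(max_pos − p − 1, 0) + 1`. -/
noncomputable def embedLen (b : A) (c : Config Q A) : ℕ :=
  (maxPos b c.2.1 - minPos b c.2.1).toNat + (maxPos b c.2.1 - c.2.2 - 1).toNat + 1

/-- The embedding of an (embeddable) configuration `c = (q, σ, p)` as a token
sequence `(x₁, …, x_n)` with `x_i = (q, σ(min_pos + ∑_{j<i} d_j), d_i)`. -/
noncomputable def embed (b : A) (c : Config Q A) : List (Q × A × ℤ) :=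
  List.ofFn (fun i : Fin (embedLen b c) =>
    (c.1, c.2.1 (posAt (minPos b c.2.1) (maxPos b c.2.1) c.2.2 (i + 1)),
      moveAt (minPos b c.2.1) (maxPos b c.2.1) c.2.2 (i + 1)))

open Classical in
lemma fold_formula (q₀ q : Q) (b : A) (σ : ℤ → A) (l : ℤ) (d : ℕ → ℤ) (n : ℕ) :
    UpdateSeq (q₀, fun _ => b, (0:ℤ))
      (List.ofFn (fun i : Fin n => (q, σ (l + ∑ j ∈ Finset.range (i:ℕ), d j), d i))) =
    ((if n = 0 then q₀ else q),
     (fun x => if ∃ j < n, (∑ j' ∈ Finset.range j, d j') = x then σ (l + x) else b),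
     ∑ j ∈ Finset.range n, d j) := by
  induction n with
  | zero =>
    simp [UpdateSeq]
  | succ n ih =>
    rw [List.ofFn_succ']
    simp only [List.concat_eq_append, UpdateSeq, List.foldl_append, List.foldl_cons,
      List.foldl_nil]
    rw [show (List.foldl Update (q₀, fun _ => b, (0:ℤ))
        (List.ofFn fun i : Fin n =>
          (q, σ (l + ∑ j ∈ Finset.range ((i.castSucc : ℕ)), d j), d (i.castSucc : ℕ)))) =
        UpdateSeq (q₀, fun _ => b, (0:ℤ))
        (List.ofFn fun i : Fin n => (q, σ (l + ∑ j ∈ Finset.range (i:ℕ), d j), d i)) from rfl]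
    rw [ih]
    simp only [Update, Fin.val_last]
    refine Prod.ext rfl (Prod.ext ?_ ?_)
    · funext x
      simp only
      by_cases hx : (∑ j' ∈ Finset.range n, d j') = x
      · subst hx
        rw [Function.update_self]
        rw [if_pos ⟨n, Nat.lt_succ_self n, rfl⟩]
      · rw [Function.update_of_ne (by exact fun h => hx h.symm)]
        congr 1
        simp only [eq_iff_iff]
        constructor
        · rintro ⟨j, hj, hjx⟩; exact ⟨j, Nat.lt_succ_of_lt hj, hjx⟩
        · rintro ⟨j, hj, hjx⟩
          rcases Nat.lt_succ_iff_lt_or_eq.mp hj with h | rfl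
          · exact ⟨j, h, hjx⟩
          · exact absurd hjx hx
    · simp [Finset.sum_range_succ]

/-- For every embeddable Turing-machine configuration `c`,
applying the token sequence `embed c` to the all-blank initial configuration
`c₀ = (q₀, fun _ ↦ b, 0)` recovers `c` up to translation:
`Update(c₀, embed c) ∼ c`. -/

theorem updateSeq_embed_transEquiv [Fintype Q] [Fintype A] (b : A) (q₀ : Q)
    (δ : Q → A → Q × A × ℤ)
    (hδ₁ : ∀ q a, (δ q a).2.1 ≠ b)
    (hδ₂ : ∀ q a, (δ q a).2.2 = -1 ∨ (δ q a).2.2 = 0 ∨ (δ q a).2.2 = 1)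
    (c : Config Q A) (hc : Embeddable b c) :
    TransEquiv (UpdateSeq (q₀, fun _ => b, (0 : ℤ)) (embed b c)) c := by
  classical
  obtain ⟨q, σ, p⟩ := c
  obtain ⟨hfin, hne, hp1, hp2⟩ := hc
  set l := minPos b σ with hldef
  set m := maxPos b σ with hmdef
  set d : ℕ → ℤ := fun j => moveAt l m p (j + 1) with hddef
  set S : ℕ → ℤ := fun j => ∑ j' ∈ Finset.range j, d j' with hSdef
  set n : ℕ := embedLen b (q, σ, p) with hndef
  replace hp1 : l - 1 ≤ p := hp1
  replace hp2 : p ≤ m + 1 := hp2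
  -- basic facts
  have hub : ∀ j : ℤ, σ j ≠ b → j ≤ m := fun j hj =>
    le_csSup hfin.bddAbove hj
  have hlb : ∀ j : ℤ, σ j ≠ b → l ≤ j := fun j hj =>
    csInf_le hfin.bddBelow hj
  have hlm : l ≤ m := by
    obtain ⟨j, hj⟩ := hne
    exact (hlb j hj).trans (hub j hj)
  set t : ℕ := (m - l).toNat with htdef
  have ht : (t : ℤ) = m - l := Int.toNat_of_nonneg (by omega)
  have hn : n = t + 1 + (m - p - 1).toNat := by
    have h0 : n = (m - l).toNat + (m - p - 1).toNat + 1 := rfl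
    omega
  -- sum along ascending part
  have sum1 : ∀ j : ℕ, (j : ℤ) ≤ m - l → S j = j := by
    intro j
    induction j with
    | zero => intro _; simp [hSdef]
    | succ j ih =>
      intro hj
      have hj' : (j : ℤ) ≤ m - l := by push_cast at hj ⊢; omega
      have : d j = 1 := by
        simp only [hddef, moveAt]
        rw [if_pos (by push_cast at hj ⊢; omega)]
      simp only [hSdef, Finset.sum_range_succ] at *
      rw [ih hj', this]
      push_cast; ring
  have hSt : S t = m - l := by rw [sum1 t (by omega)]; omega
  have hdt : d t = (if p = m + 1 then 1 else if p = m then 0 else -1) := by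
    simp only [hddef, moveAt]
    rw [if_neg (by omega), if_pos (by omega)]
  have hSt1 : S (t + 1) = (m - l) + (if p = m + 1 then 1 else if p = m then 0 else -1) := by
    simp only [hSdef, Finset.sum_range_succ] at *
    rw [hSt, hdt]
  have sumdec : ∀ k : ℕ, S (t + 1 + k) = S (t + 1) - k := by
    intro k
    induction k with
    | zero => simp
    | succ k ih =>
      have hd : d (t + 1 + k) = -1 := by
        simp only [hddef, moveAt]
        rw [if_neg (by push_cast; omega), if_neg (by push_cast; omega)]
      have : t + 1 + (k + 1) = (t + 1 + k) + 1 := by omega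
      rw [this]
      simp only [hSdef, Finset.sum_range_succ] at *
      rw [ih, hd]
      push_cast; ring
  have hSn : S n = p - l := by
    rw [hn, sumdec, hSt1]
    by_cases h1 : p = m + 1
    · rw [if_pos h1]
      have : (m - p - 1).toNat = 0 := by omega
      rw [this]; omega
    · rw [if_neg h1]
      by_cases h2 : p = m
      · rw [if_pos h2]
        have : (m - p - 1).toNat = 0 := by omega
        rw [this]; omega
      · rw [if_neg h2]
        have hple : p ≤ m - 1 := by omega
        have : ((m - p - 1).toNat : ℤ) = m - p - 1 := Int.toNat_of_nonneg (by omega)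
        omega
  -- rewrite embed into the ofFn form
  have hembed : embed b (q, σ, p) =
      List.ofFn (fun i : Fin n => (q, σ (l + ∑ j ∈ Finset.range (i : ℕ), d j), d i)) := by
    simp only [embed, posAt, hddef, hndef]
    rfl
  rw [hembed, fold_formula]
  refine ⟨by simp [hn], -l, ?_, ?_⟩
  · intro i
    simp only
    by_cases hhit : ∃ j < n, S j = i
    · rw [if_pos hhit]
      congr 1; ring
    · rw [if_neg hhit]
      by_contra hne'
      have hσ : σ (i - -l) ≠ b := fun h => hne' h.symm
      have h1 : l ≤ i - -l := hlb _ hσ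
      have h2 : i - -l ≤ m := hub _ hσ
      have hi0 : 0 ≤ i := by omega
      have hitm : i ≤ m - l := by omega
      refine hhit ⟨i.toNat, ?_, ?_⟩
      · have : (i.toNat : ℤ) ≤ (t : ℤ) := by rw [Int.toNat_of_nonneg hi0, ht]; exact hitm
        omega
      · rw [sum1 i.toNat (by rw [Int.toNat_of_nonneg hi0]; exact hitm),
          Int.toNat_of_nonneg hi0]
  · show S n = p + -l
    rw [hSn]; omega
end

section
/- The autoregressive machine faithfully simulates the Turing machine: for every embeddable configuration c and every k ≥ 0, Update(c₀, f_π^k(embed(c))) ∼ g_δ^k(c), where c₀ = (q₀, (fun _ ↦ b), 0) is the all-blank initial configuration. -/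
variable {Q A : Type*}

/-- The next-token generator of the autoregressive representation of the Turing
machine: `π(x) := δ(Update(c₀, x))`, where `c₀ = (q₀, fun _ ↦ b, 0)`. -/
def nextTok (δ : Q → A → Q × A × ℤ) (q₀ : Q) (b : A)
    (xs : List (Q × A × ℤ)) : Q × A × ℤ :=
  extDelta δ (UpdateSeq (q₀, fun _ => b, (0 : ℤ)) xs)

/-- One-step extension of the next-token generator: `f_π(x) = x ++ [π x]`. -/
def fpi (δ : Q → A → Q × A × ℤ) (q₀ : Q) (b : A)
    (xs : List (Q × A × ℤ)) : List (Q × A × ℤ) :=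
  xs ++ [nextTok δ q₀ b xs]

section AuxSim

private def Psum (l m p : ℤ) (i : ℕ) : ℤ := ∑ j ∈ Finset.range i, moveAt l m p (j + 1)

private lemma posAt_eq (l m p : ℤ) (i : ℕ) : posAt l m p (i + 1) = l + Psum l m p i := by
  simp [posAt, Psum]

private lemma Psum_succ (l m p : ℤ) (i : ℕ) :
    Psum l m p (i + 1) = Psum l m p i + moveAt l m p (i + 1) :=
  Finset.sum_range_succ _ _

private lemma Psum_eq (l m p : ℤ) (hlm : l ≤ m) (i : ℕ) :
    Psum l m p i =
      if (i : ℤ) ≤ m - l then (i : ℤ)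
      else (m - l) + (if p = m + 1 then 1 else if p = m then 0 else -1)
            - ((i : ℤ) - (m - l) - 1) := by
  induction i with
  | zero =>
      simp only [Psum, Finset.range_zero, Finset.sum_empty, Nat.cast_zero]
      split_ifs <;> omega
  | succ i ih =>
      rw [Psum_succ, ih]
      simp only [moveAt]
      push_cast
      split_ifs <;> omega

private lemma updateSeq_sweep (q₀ q : Q) (b : A) (σ : ℤ → A) (l m p : ℤ)
    (hlm : l ≤ m) (hp1 : l - 1 ≤ p) (hp2 : p ≤ m + 1)
    (hσ : ∀ j : ℤ, j < l ∨ m < j → σ j = b) :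
    UpdateSeq (q₀, fun _ => b, (0 : ℤ))
      (List.ofFn (fun i : Fin ((m - l).toNat + (m - p - 1).toNat + 1) =>
        ((q, σ (posAt l m p ((i : ℕ) + 1)), moveAt l m p ((i : ℕ) + 1)) : Q × A × ℤ)))
      = (q, fun j => σ (j + l), p - l) := by
  set n := (m - l).toNat + (m - p - 1).toNat + 1 with hn
  set xs := List.ofFn (fun i : Fin n =>
    ((q, σ (posAt l m p ((i : ℕ) + 1)), moveAt l m p ((i : ℕ) + 1)) : Q × A × ℤ)) with hxs
  have hlen : xs.length = n := by rw [hxs, List.length_ofFn]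
  have hups : ∀ (c : Config Q A) (ys : List (Q × A × ℤ)) (t : Q × A × ℤ),
      UpdateSeq c (ys ++ [t]) = Update (UpdateSeq c ys) t := by
    intro c ys t; simp [UpdateSeq]
  have key : ∀ i, i ≤ n →
      UpdateSeq (q₀, fun _ => b, (0 : ℤ)) (xs.take i)
        = ((if i = 0 then q₀ else q),
           (fun j : ℤ => if 0 ≤ j ∧ j < min (i : ℤ) (m - l + 1) then σ (j + l) else b),
           Psum l m p i) := by
    intro i
    induction i with
    | zero =>
        intro _
        refine Prod.ext rfl (Prod.ext ?_ ?_)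
        · funext j
          simp only [UpdateSeq, List.take_zero, List.foldl_nil]
          rw [if_neg (by omega)]
        · simp [UpdateSeq, Psum]
    | succ i ih =>
        intro hi
        have hi' : i < n := by omega
        have hstep : xs.take (i + 1)
            = xs.take i ++ [(q, σ (posAt l m p (i + 1)), moveAt l m p (i + 1))] := by
          rw [List.take_succ]
          congr 1
          rw [List.getElem?_eq_getElem (by omega : i < xs.length)]
          simp only [hxs, List.getElem_ofFn]
          rfl
        rw [hstep, hups, ih (by omega)]
        have hPi := Psum_eq l m p hlm i
        have hbound : 0 ≤ Psum l m p i ∧ Psum l m p i < min ((i : ℤ) + 1) (m - l + 1) := by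
          split_ifs at hPi <;> omega
        refine Prod.ext rfl (Prod.ext ?_ ?_)
        · show Function.update
            (fun j : ℤ => if 0 ≤ j ∧ j < min (i : ℤ) (m - l + 1) then σ (j + l) else b)
            (Psum l m p i) (σ (posAt l m p (i + 1)))
            = fun j : ℤ =>
                if 0 ≤ j ∧ j < min ((((i : ℕ) + 1 : ℕ)) : ℤ) (m - l + 1) then σ (j + l) else b
          funext j
          rw [posAt_eq]
          rcases eq_or_ne j (Psum l m p i) with hj | hj
          · have hcond : 0 ≤ Psum l m p i ∧
                Psum l m p i < min (((i : ℕ) + 1 : ℕ) : ℤ) (m - l + 1) := by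
              push_cast
              exact hbound
            rw [hj, Function.update_self, if_pos hcond, add_comm l]
          · rw [Function.update_of_ne hj]
            have hC : (0 ≤ j ∧ j < min (i : ℤ) (m - l + 1))
                ↔ (0 ≤ j ∧ j < min (((i : ℕ) + 1 : ℕ) : ℤ) (m - l + 1)) := by
              push_cast
              split_ifs at hPi <;> omega
            simp only [hC]
        · show Psum l m p i + moveAt l m p (i + 1) = Psum l m p (i + 1)
          exact (Psum_succ l m p i).symm
  have hfin := key n le_rfl
  rw [← hlen, List.take_length, hlen] at hfin
  rw [hfin]
  have hPn := Psum_eq l m p hlm n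
  refine Prod.ext (by rw [if_neg (by omega)]) (Prod.ext ?_ ?_)
  · funext j
    simp only
    split_ifs with h
    · rfl
    · exact (hσ _ (by omega)).symm
  · show Psum l m p n = p - l
    split_ifs at hPn <;> omega

private lemma transEquiv_gStep (δ : Q → A → Q × A × ℤ) (c₁ c₂ : Config Q A)
    (h : TransEquiv c₁ c₂) : TransEquiv (gStep δ c₁) (gStep δ c₂) := by
  obtain ⟨q₁, τ, r⟩ := c₁
  obtain ⟨q₂, σ, p⟩ := c₂
  obtain ⟨hq, k, hτ, hr⟩ := h
  simp only at hq hτ hr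
  subst hq hr
  have hread : τ (p + k) = σ p := by rw [hτ]; congr 1; ring
  have hext : extDelta δ (q₁, τ, p + k) = extDelta δ (q₁, σ, p) := by
    simp [extDelta, hread]
  refine ⟨?_, k, ?_, ?_⟩
  · show (extDelta δ (q₁, τ, p + k)).1 = (extDelta δ (q₁, σ, p)).1
    rw [hext]
  · intro i
    show Function.update τ (p + k) (extDelta δ (q₁, τ, p + k)).2.1 i
        = Function.update σ p (extDelta δ (q₁, σ, p)).2.1 (i - k)
    rw [hext]
    rcases eq_or_ne i (p + k) with hi | hi
    · rw [hi, Function.update_self, show p + k - k = p by ring, Function.update_self]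
    · rw [Function.update_of_ne hi, Function.update_of_ne (by omega), hτ]
  · show p + k + (extDelta δ (q₁, τ, p + k)).2.2
        = p + (extDelta δ (q₁, σ, p)).2.2 + k
    rw [hext]; ring

private lemma updateSeq_fpi (δ : Q → A → Q × A × ℤ) (q₀ : Q) (b : A)
    (xs : List (Q × A × ℤ)) :
    UpdateSeq (q₀, fun _ => b, (0 : ℤ)) (fpi δ q₀ b xs)
      = gStep δ (UpdateSeq (q₀, fun _ => b, (0 : ℤ)) xs) := by
  simp [fpi, UpdateSeq, nextTok, gStep, List.foldl_append]

end AuxSim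

/-- The autoregressive machine faithfully simulates the Turing
machine: for every embeddable configuration `c` and every `k ≥ 0`,
`Update(c₀, f_π^[k](embed c)) ∼ g_δ^[k](c)`, where `c₀ = (q₀, fun _ ↦ b, 0)` is
the all-blank initial configuration. -/
theorem autoregressive_simulates_TM [Fintype Q] [Fintype A] (b : A) (q₀ : Q)
    (δ : Q → A → Q × A × ℤ)
    (hδ₁ : ∀ q a, (δ q a).2.1 ≠ b)
    (hδ₂ : ∀ q a, (δ q a).2.2 = -1 ∨ (δ q a).2.2 = 0 ∨ (δ q a).2.2 = 1)
    (c : Config Q A) (hc : Embeddable b c) :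
    ∀ k : ℕ,
      TransEquiv
        (UpdateSeq (q₀, fun _ => b, (0 : ℤ)) ((fpi δ q₀ b)^[k] (embed b c)))
        ((gStep δ)^[k] c) := by
  obtain ⟨q, σc, p⟩ := c
  obtain ⟨hfin, hne, hp1, hp2⟩ := hc
  simp only at hfin hne hp1 hp2
  have hbdd_a : BddAbove {j : ℤ | σc j ≠ b} := hfin.bddAbove
  have hbdd_b : BddBelow {j : ℤ | σc j ≠ b} := hfin.bddBelow
  have hmem : ∀ j, σc j ≠ b → minPos b σc ≤ j ∧ j ≤ maxPos b σc := fun j hj =>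
    ⟨csInf_le hbdd_b hj, le_csSup hbdd_a hj⟩
  have hlm : minPos b σc ≤ maxPos b σc := by
    obtain ⟨j, hj⟩ := hne
    exact le_trans (hmem j hj).1 (hmem j hj).2
  have hσ : ∀ j : ℤ, j < minPos b σc ∨ maxPos b σc < j → σc j = b := by
    intro j hj
    by_contra h
    have := hmem j h
    omega
  have hbase := updateSeq_sweep q₀ q b σc (minPos b σc) (maxPos b σc) p hlm hp1 hp2 hσ
  have hembed : embed b ((q, σc, p) : Config Q A)
      = List.ofFn (fun i : Fin ((maxPos b σc - minPos b σc).toNat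
            + (maxPos b σc - p - 1).toNat + 1) =>
          ((q, σc (posAt (minPos b σc) (maxPos b σc) p ((i : ℕ) + 1)),
            moveAt (minPos b σc) (maxPos b σc) p ((i : ℕ) + 1)) : Q × A × ℤ)) := rfl
  intro k
  induction k with
  | zero =>
      simp only [Function.iterate_zero, id]
      rw [hembed, hbase]
      refine ⟨rfl, -(minPos b σc), fun i => ?_, by ring⟩
      congr 1
      ring
  | succ k ih =>
      rw [Function.iterate_succ_apply', Function.iterate_succ_apply', updateSeq_fpi]
      exact transEquiv_gStep δ _ _ ih
end

section
/- The tokens generated by the autoregressive machine coincide with the Turing machine's transitions: for every embeddable configuration c and every t ≥ 0, π(f_π^t(embed(c))) = δ(g_δ^t(c)). In particular, the autoregressive machine generates an accepting (resp. rejecting) token exactly when the Turing machine enters an accepting (resp. rejecting) state. -/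
variable {Q A : Type*}

/-!
Folding the embedding of `c` into the blank configuration `c₀` walks the head from `min_pos`
right to `max_pos` and back to `p`, copying every cell it reads; this reproduces `c` up to a
translation of the tape by `min_pos`. Folding a generated token `π x` is exactly one step
`g_δ` of the configuration reached so far, and `δ`, `g_δ` respect translations, so the
configurations stay translates of `gStep^[t] c` and read the same transition.
-/

namespace TransEquiv

variable {c₁ c₂ : Config Q A}

theorem extDelta_eq (δ : Q → A → Q × A × ℤ) (h : TransEquiv c₁ c₂) :
    extDelta δ c₁ = extDelta δ c₂ := by
  obtain ⟨hq, k, hσ, hp⟩ := h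
  rw [extDelta, extDelta, hq, hσ, hp, add_sub_cancel_right]

theorem gStep (δ : Q → A → Q × A × ℤ) (h : TransEquiv c₁ c₂) :
    TransEquiv (gStep δ c₁) (gStep δ c₂) := by
  have hδ := h.extDelta_eq δ
  obtain ⟨-, k, hσ, hp⟩ := h
  refine ⟨by simp only [_root_.gStep, Update, hδ], k, fun i => ?_, ?_⟩
  · simp only [_root_.gStep, Update, hδ, Function.update_apply, hσ, hp]
    exact if_congr (by omega) rfl rfl
  · simp only [_root_.gStep, Update, hδ, hp]
    ring

theorem iterate_gStep (δ : Q → A → Q × A × ℤ) (h : TransEquiv c₁ c₂) (t : ℕ) :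
    TransEquiv ((_root_.gStep δ)^[t] c₁) ((_root_.gStep δ)^[t] c₂) := by
  induction t with
  | zero => exact h
  | succ t ih => simpa only [Function.iterate_succ_apply'] using ih.gStep δ

end TransEquiv

theorem UpdateSeq_append_singleton (c : Config Q A) (xs : List (Q × A × ℤ))
    (x : Q × A × ℤ) : UpdateSeq c (xs ++ [x]) = Update (UpdateSeq c xs) x := by
  simp [UpdateSeq, List.foldl_append]

theorem UpdateSeq_iterate_fpi (δ : Q → A → Q × A × ℤ) (q₀ : Q) (b : A)
    (xs : List (Q × A × ℤ)) (t : ℕ) :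
    UpdateSeq (q₀, fun _ => b, 0) ((fpi δ q₀ b)^[t] xs) =
      (gStep δ)^[t] (UpdateSeq (q₀, fun _ => b, 0) xs) := by
  have hsemiconj : Function.Semiconj (UpdateSeq (q₀, fun _ => b, 0)) (fpi δ q₀ b) (gStep δ) :=
    fun xs => by rw [fpi, UpdateSeq_append_singleton, nextTok, gStep]
  exact (hsemiconj.iterate_right t).eq xs

theorem UpdateSeq_map_range_walk (q₀ q : Q) (τ₀ τ : ℤ → A) (w : ℕ → ℤ) (n : ℕ) :
    UpdateSeq (q₀, τ₀, w 0) ((List.range n).map fun i => (q, τ (w i), w (i + 1) - w i)) =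
      (if n = 0 then q₀ else q, fun x => if ∃ i < n, w i = x then τ x else τ₀ x, w n) := by
  induction n with
  | zero => simp [UpdateSeq]
  | succ n ih =>
    rw [List.range_succ, List.map_append, List.map_singleton, UpdateSeq_append_singleton, ih]
    refine Prod.ext rfl (Prod.ext (funext fun x => ?_) (add_sub_cancel _ _))
    simp only [Update, Function.update_apply, Nat.lt_succ_iff_lt_or_eq, or_and_right,
      exists_or, exists_eq_left]
    by_cases hx : x = w n <;> simp [hx, eq_comm]

section Moves

variable (l m p : ℤ)

/-- Head offset, relative to `l`, after the first `k` tokens of the embedding. -/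
def moveSum (k : ℕ) : ℤ := ∑ j ∈ Finset.range k, moveAt l m p (j + 1)

theorem moveAt_of_le {i : ℕ} (hi : (i : ℤ) ≤ m - l) : moveAt l m p i = 1 :=
  if_pos hi

theorem moveAt_of_lt {i : ℕ} (hi : m - l + 1 < i) : moveAt l m p i = -1 := by
  rw [moveAt, if_neg (by omega), if_neg (by omega)]

theorem moveSum_of_le {k : ℕ} (hk : (k : ℤ) ≤ m - l) : moveSum l m p k = k := by
  rw [moveSum, Finset.sum_congr rfl fun j hj => moveAt_of_le l m p (i := j + 1) ?_]
  · simp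
  · have := Finset.mem_range.mp hj
    omega

theorem moveSum_embedLen (hlm : l ≤ m) (hp : p ≤ m + 1) :
    moveSum l m p ((m - l).toNat + (m - p - 1).toNat + 1) = p - l := by
  have hsplit : (m - l).toNat + (m - p - 1).toNat + 1 =
      ((m - l).toNat + 1) + (m - p - 1).toNat := by omega
  have hreturn : ∑ j ∈ Finset.range (m - p - 1).toNat,
      moveAt l m p ((m - l).toNat + 1 + j + 1) = -(m - p - 1).toNat := by
    rw [Finset.sum_congr rfl fun j _ => moveAt_of_lt l m p (by omega)]
    simp
  rw [moveSum, hsplit, Finset.sum_range_add, Finset.sum_range_succ, ← moveSum,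
    moveSum_of_le l m p (by omega), hreturn, moveAt, if_neg (by omega), if_pos (by omega)]
  split_ifs <;> omega

end Moves

section Embed

variable {b : A} {c : Config Q A}

theorem Embeddable.minPos_le_maxPos (hc : Embeddable b c) : minPos b c.2.1 ≤ maxPos b c.2.1 :=
  csInf_le_csSup hc.2.1 hc.1.bddBelow hc.1.bddAbove

theorem Embeddable.eq_blank_of_notMem_Icc (hc : Embeddable b c) {j : ℤ}
    (hj : j ∉ Set.Icc (minPos b c.2.1) (maxPos b c.2.1)) : c.2.1 j = b := by
  by_contra h
  exact hj ⟨csInf_le hc.1.bddBelow h, le_csSup hc.1.bddAbove h⟩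

theorem embed_eq_map_range (b : A) (c : Config Q A) :
    embed b c = (List.range (embedLen b c)).map fun i =>
      (c.1, c.2.1 (minPos b c.2.1 + moveSum (minPos b c.2.1) (maxPos b c.2.1) c.2.2 i),
        moveSum (minPos b c.2.1) (maxPos b c.2.1) c.2.2 (i + 1) -
          moveSum (minPos b c.2.1) (maxPos b c.2.1) c.2.2 i) := by
  refine List.ext_getElem (by simp [embed]) fun i _ _ => ?_
  simp [embed, posAt, moveSum, Finset.sum_range_succ]

theorem transEquiv_UpdateSeq_embed (q₀ : Q) (hc : Embeddable b c) :
    TransEquiv (UpdateSeq (q₀, fun _ => b, 0) (embed b c)) c := by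
  set l := minPos b c.2.1
  set m := maxPos b c.2.1
  have hfold := UpdateSeq_map_range_walk q₀ c.1 (fun _ => b) (fun x => c.2.1 (l + x))
    (moveSum l m c.2.2) (embedLen b c)
  rw [show moveSum l m c.2.2 0 = 0 from rfl, ← embed_eq_map_range] at hfold
  rw [hfold]
  refine ⟨by simp [embedLen], -l, fun x => ?_, ?_⟩
  · dsimp only
    rw [sub_neg_eq_add, add_comm x l]
    split_ifs with hvisited
    · rfl
    · -- the rightward sweep visits every cell of `[l, m]`, at step `x`
      refine (hc.eq_blank_of_notMem_Icc fun ⟨hlo, hhi⟩ => hvisited ⟨x.toNat, ?_, ?_⟩).symm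
      · simp only [embedLen]
        omega
      · rw [moveSum_of_le l m c.2.2 (by omega)]
        omega
  · dsimp only
    rw [embedLen, moveSum_embedLen l m c.2.2 hc.minPos_le_maxPos hc.2.2.2]
    ring

end Embed

theorem autoregressive_tokens_eq_TM_transitions_general
    (b : A) (q₀ : Q)
    (δ : Q → A → Q × A × ℤ)
    (Qacc Qrej : Set Q)
    (c : Config Q A) (hc : Embeddable b c) :
    ∀ t : ℕ,
      nextTok δ q₀ b ((fpi δ q₀ b)^[t] (embed b c)) = extDelta δ ((gStep δ)^[t] c) ∧
      ((nextTok δ q₀ b ((fpi δ q₀ b)^[t] (embed b c))).1 ∈ Qacc ↔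
        (extDelta δ ((gStep δ)^[t] c)).1 ∈ Qacc) ∧
      ((nextTok δ q₀ b ((fpi δ q₀ b)^[t] (embed b c))).1 ∈ Qrej ↔
        (extDelta δ ((gStep δ)^[t] c)).1 ∈ Qrej) := by
  intro t
  have htoken :
      nextTok δ q₀ b ((fpi δ q₀ b)^[t] (embed b c)) = extDelta δ ((gStep δ)^[t] c) := by
    rw [nextTok, UpdateSeq_iterate_fpi]
    exact ((transEquiv_UpdateSeq_embed q₀ hc).iterate_gStep δ t).extDelta_eq δ
  exact ⟨htoken, by rw [htoken], by rw [htoken]⟩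

/-- The tokens generated by the autoregressive machine coincide
with the Turing machine's transitions: for every embeddable configuration `c` and
every `t ≥ 0`, `π(f_π^[t](embed c)) = δ(g_δ^[t](c))`.  In particular, for any set
`Qacc` of accepting (resp. `Qrej` of rejecting) states, the autoregressive machine
generates an accepting (resp. rejecting) token exactly when the Turing machine
enters an accepting (resp. rejecting) state. -/
theorem autoregressive_tokens_eq_TM_transitions [Fintype Q] [Fintype A]
    (b : A) (q₀ : Q)
    (δ : Q → A → Q × A × ℤ)
    (hδ₁ : ∀ q a, (δ q a).2.1 ≠ b)
    (hδ₂ : ∀ q a, (δ q a).2.2 = -1 ∨ (δ q a).2.2 = 0 ∨ (δ q a).2.2 = 1)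
    (Qacc Qrej : Set Q)
    (c : Config Q A) (hc : Embeddable b c) :
    ∀ t : ℕ,
      nextTok δ q₀ b ((fpi δ q₀ b)^[t] (embed b c)) = extDelta δ ((gStep δ)^[t] c) ∧
      ((nextTok δ q₀ b ((fpi δ q₀ b)^[t] (embed b c))).1 ∈ Qacc ↔
        (extDelta δ ((gStep δ)^[t] c)).1 ∈ Qacc) ∧
      ((nextTok δ q₀ b ((fpi δ q₀ b)^[t] (embed b c))).1 ∈ Qrej ↔
        (extDelta δ ((gStep δ)^[t] c)).1 ∈ Qrej) :=
  autoregressive_tokens_eq_TM_transitions_general b q₀ δ Qacc Qrej c hc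
end

section
/- The Turing-machine state function is idempotent: for every nonempty token sequence x all of whose tokens have non-blank symbol component, s_TM(s_TM(x)) = s_TM(x). -/
variable {Q A : Type*}

/-- The Turing-machine state function: `s_TM(x) := embed(Update(c₀, x))`, where
`c₀ = (q₀, fun _ ↦ b, 0)` is the all-blank initial configuration. -/
noncomputable def sTM (b : A) (q₀ : Q) (xs : List (Q × A × ℤ)) :
    List (Q × A × ℤ) :=
  embed b (UpdateSeq (q₀, fun _ => b, (0 : ℤ)) xs)

/-!
Replaying `embed (q, σ, p)` from the blank tape walks right across `[min_pos, max_pos]` and then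
back, writing every non-blank cell of `σ`; it therefore produces `σ` translated so that `min_pos`
sits at `0`, with the head where the walk ends (at `p`, or at `max_pos - 1` when
`p ≥ max_pos + 2`). Since `embed` is invariant under translation and does not distinguish a head
at `p ≥ max_pos + 2` from one at `max_pos - 1`, embedding the replayed configuration gives back
`embed (q, σ, p)`.
-/

open Finset

section Shift

variable (b : A) (σ : ℤ → A) (k : ℤ)

lemma support_comp_add_right :
    {j : ℤ | σ (j + k) ≠ b} = OrderIso.addRight (-k) '' {j | σ j ≠ b} := by
  ext j
  simp only [Set.mem_ofPred_eq, Set.mem_image, OrderIso.addRight_apply]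
  exact ⟨fun h => ⟨j + k, h, by ring⟩, by rintro ⟨i, hi, rfl⟩; simpa using hi⟩

variable {b σ}

lemma minPos_comp_add_right (hfin : {j : ℤ | σ j ≠ b}.Finite)
    (hne : {j : ℤ | σ j ≠ b}.Nonempty) :
    minPos b (fun i => σ (i + k)) = minPos b σ - k := by
  rw [minPos, minPos, support_comp_add_right, ← OrderIso.map_csInf' _ hne hfin.bddBelow,
    OrderIso.addRight_apply, sub_eq_add_neg]

lemma maxPos_comp_add_right (hfin : {j : ℤ | σ j ≠ b}.Finite)
    (hne : {j : ℤ | σ j ≠ b}.Nonempty) :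
    maxPos b (fun i => σ (i + k)) = maxPos b σ - k := by
  rw [maxPos, maxPos, support_comp_add_right, ← OrderIso.map_csSup' _ hne hfin.bddAbove,
    OrderIso.addRight_apply, sub_eq_add_neg]

lemma moveAt_sub (l m p : ℤ) (i : ℕ) : moveAt (l - k) (m - k) (p - k) i = moveAt l m p i := by
  have hturn : m - k + 1 = m + 1 - k := by ring
  simp only [moveAt, sub_sub_sub_cancel_right, hturn, sub_left_inj]

lemma posAt_sub (l m p : ℤ) (i : ℕ) : posAt (l - k) (m - k) (p - k) i = posAt l m p i - k := by
  simp only [posAt, moveAt_sub]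
  ring

lemma embed_comp_add_right (q : Q) (p : ℤ) (hfin : {j : ℤ | σ j ≠ b}.Finite)
    (hne : {j : ℤ | σ j ≠ b}.Nonempty) :
    embed b (q, (fun i => σ (i + k)), p - k) = embed b (q, σ, p) := by
  have hmin := minPos_comp_add_right k hfin hne
  have hmax := maxPos_comp_add_right k hfin hne
  have hlen : embedLen b (q, (fun i => σ (i + k)), p - k) = embedLen b (q, σ, p) := by
    simp only [embedLen, hmin, hmax, sub_sub_sub_cancel_right]
  refine List.ext_getElem (by simp [embed, hlen]) fun i _ _ => ?_
  simp [embed, hmin, hmax, posAt_sub, moveAt_sub]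

lemma embed_of_maxPos_add_two_le (q : Q) {p : ℤ} (hp : maxPos b σ + 2 ≤ p) :
    embed b (q, σ, p) = embed b (q, σ, maxPos b σ - 1) := by
  have hmove : ∀ l i, moveAt l (maxPos b σ) p i = moveAt l (maxPos b σ) (maxPos b σ - 1) i := by
    intro l i
    unfold moveAt
    split_ifs <;> omega
  have hlen : embedLen b (q, σ, p) = embedLen b (q, σ, maxPos b σ - 1) := by
    simp only [embedLen]
    omega
  refine List.ext_getElem (by simp [embed, hlen]) fun i _ _ => ?_
  simp [embed, posAt, hmove]

end Shift

lemma updateSeq_append_singleton (c : Config Q A) (xs : List (Q × A × ℤ)) (t : Q × A × ℤ) :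
    UpdateSeq c (xs ++ [t]) = Update (UpdateSeq c xs) t := by
  simp [UpdateSeq]

lemma updateSeq_ofFn_walk (c : Config Q A) (q : Q) (f : ℤ → A) (w : ℕ → ℤ) (hw : c.2.2 = w 0)
    (n : ℕ) :
    UpdateSeq c (List.ofFn fun i : Fin (n + 1) => (q, f (w i), w (i + 1) - w i)) =
      (q, fun j => if j ∈ (range (n + 1)).image w then f j else c.2.1 j, w (n + 1)) := by
  induction n with
  | zero =>
    simp only [UpdateSeq, Update, List.ofFn_succ, List.ofFn_zero, List.foldl_cons,
      List.foldl_nil, hw]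
    refine Prod.ext rfl (Prod.ext (funext fun j => ?_) (by simp))
    by_cases h : j = w 0 <;> simp [h]
  | succ n ih =>
    rw [List.ofFn_succ', List.concat_eq_append, updateSeq_append_singleton]
    simp only [Fin.val_castSucc, Fin.val_last]
    rw [ih, Update]
    simp only [range_add_one (n := n + 1), image_insert, mem_insert]
    congr
    · ext j
      by_cases h : j = w (n + 1) <;> simp [h]
    · ring

def embedWalk (l m p : ℤ) (i : ℕ) : ℤ := ∑ j ∈ range i, moveAt l m p (j + 1)

section EmbedWalk

variable {l m p : ℤ}

lemma embedWalk_of_le {i : ℕ} (hi : (i : ℤ) ≤ m - l) : embedWalk l m p i = i := by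
  have hmove : ∀ j ∈ range i, moveAt l m p (j + 1) = 1 := fun j hj => by
    have := mem_range.1 hj
    rw [moveAt, if_pos (by omega)]
  simp [embedWalk, sum_congr rfl hmove]

lemma embedWalk_embedLen (hlm : l ≤ m) :
    embedWalk l m p ((m - l).toNat + (m - p - 1).toNat + 1) =
      (if p ≤ m + 1 then p else m - 1) - l := by
  set L := (m - l).toNat
  set K := (m - p - 1).toNat
  have hL : (L : ℤ) = m - l := Int.toNat_of_nonneg (by omega)
  have hturn : moveAt l m p (L + 1) = if p = m + 1 then 1 else if p = m then 0 else -1 := by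
    rw [moveAt, if_neg (by omega), if_pos (by omega)]
  have hback : ∀ k ∈ range K, moveAt l m p (L + (k + 1) + 1) = -1 := fun k _ => by
    rw [moveAt, if_neg (by omega), if_neg (by omega)]
  rw [add_assoc, embedWalk, sum_range_add, ← embedWalk, embedWalk_of_le hL.le, sum_range_succ',
    sum_congr rfl hback, add_zero, hturn]
  simp only [sum_const, card_range, nsmul_eq_mul, mul_neg, mul_one]
  split_ifs <;> omega

end EmbedWalk

lemma embed_eq_ofFn_walk (b : A) (q : Q) (σ : ℤ → A) (p : ℤ) :
    embed b (q, σ, p) = List.ofFn fun i : Fin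
        ((maxPos b σ - minPos b σ).toNat + (maxPos b σ - p - 1).toNat + 1) =>
      (q, σ (embedWalk (minPos b σ) (maxPos b σ) p i + minPos b σ),
        embedWalk (minPos b σ) (maxPos b σ) p (i + 1) -
          embedWalk (minPos b σ) (maxPos b σ) p i) := by
  refine congrArg List.ofFn (funext fun i => ?_)
  simp [posAt, embedWalk, sum_range_succ, add_comm]

section Replay

variable {b : A}

lemma updateSeq_embed {σ : ℤ → A} (hfin : {j : ℤ | σ j ≠ b}.Finite)
    (hne : {j : ℤ | σ j ≠ b}.Nonempty) (q₀ q : Q) (p : ℤ) :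
    UpdateSeq ((q₀, fun _ => b, 0) : Config Q A) (embed b (q, σ, p)) =
      (q, fun j => σ (j + minPos b σ),
        (if p ≤ maxPos b σ + 1 then p else maxPos b σ - 1) - minPos b σ) := by
  rw [embed_eq_ofFn_walk]
  set l := minPos b σ
  set m := maxPos b σ
  have hmin : ∀ {j}, σ j ≠ b → l ≤ j := fun hj => csInf_le hfin.bddBelow hj
  have hmax : ∀ {j}, σ j ≠ b → j ≤ m := fun hj => le_csSup hfin.bddAbove hj
  have hlm : l ≤ m := hne.elim fun j hj => (hmin hj).trans (hmax hj)
  rw [updateSeq_ofFn_walk _ q (fun j => σ (j + l)) _ (by simp [embedWalk]),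
    embedWalk_embedLen hlm]
  refine Prod.ext rfl (Prod.ext (funext fun j => ?_) rfl)
  -- the first `m - l + 1` tokens visit every cell of `[l, m]`
  by_contra hvisit
  have hj : σ (j + l) ≠ b := fun h => hvisit (by simp [h])
  have hlj := hmin hj
  have hjm := hmax hj
  refine hvisit (if_pos (mem_image.2 ⟨j.toNat, mem_range.2 ?_, ?_⟩))
  · omega
  · rw [embedWalk_of_le (by omega)]
    omega

lemma finite_support_updateSeq (c : Config Q A) (h : {j : ℤ | c.2.1 j ≠ b}.Finite)
    (xs : List (Q × A × ℤ)) : {j : ℤ | (UpdateSeq c xs).2.1 j ≠ b}.Finite := by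
  induction xs generalizing c with
  | nil => exact h
  | cons t ts ih =>
    refine ih _ ((h.insert c.2.2).subset fun j hj => ?_)
    by_cases hjp : j = c.2.2
    · exact Or.inl hjp
    · exact Or.inr (by simpa [Update, Function.update_of_ne hjp] using hj)

lemma nonempty_support_updateSeq (c : Config Q A) {xs : List (Q × A × ℤ)} (hxs : xs ≠ [])
    (hxb : ∀ t ∈ xs, t.2.1 ≠ b) : {j : ℤ | (UpdateSeq c xs).2.1 j ≠ b}.Nonempty := by
  rw [← List.dropLast_append_getLast hxs, updateSeq_append_singleton]
  exact ⟨(UpdateSeq c xs.dropLast).2.2, by simpa [Update] using hxb _ (List.getLast_mem hxs)⟩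

end Replay

theorem sTM_idempotent_general (b : A) (q₀ : Q)
    (x : List (Q × A × ℤ)) (hx : x ≠ [])
    (hxb : ∀ tok ∈ x, tok.2.1 ≠ b) :
    sTM b q₀ (sTM b q₀ x) = sTM b q₀ x := by
  have hfin := finite_support_updateSeq (b := b) (q₀, fun _ => b, 0) (by simp) x
  have hne := nonempty_support_updateSeq (q₀, fun _ => b, 0) hx hxb
  unfold sTM
  generalize UpdateSeq (q₀, fun _ => b, 0) x = c at hfin hne ⊢
  obtain ⟨q, σ, p⟩ := c
  rw [updateSeq_embed hfin hne, embed_comp_add_right _ _ _ hfin hne]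
  split_ifs with hp
  · rfl
  · exact (embed_of_maxPos_add_two_le q (by omega)).symm

/-- The Turing-machine state function is idempotent: for every
nonempty token sequence `x` all of whose tokens have non-blank symbol component,
`s_TM(s_TM(x)) = s_TM(x)`. -/
theorem sTM_idempotent [Fintype Q] [Fintype A] (b : A) (q₀ : Q)
    (δ : Q → A → Q × A × ℤ)
    (hδ₁ : ∀ q a, (δ q a).2.1 ≠ b)
    (hδ₂ : ∀ q a, (δ q a).2.2 = -1 ∨ (δ q a).2.2 = 0 ∨ (δ q a).2.2 = 1)
    (x : List (Q × A × ℤ)) (hx : x ≠ [])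
    (hxb : ∀ tok ∈ x, tok.2.1 ≠ b) :
    sTM b q₀ (sTM b q₀ x) = sTM b q₀ x :=
  sTM_idempotent_general b q₀ x hx hxb
end

section
/- Let I ∈ ℕ and let t, b : ℕ → ℕ satisfy t 0 = 0, b 0 = 0, t nondecreasing, and (t i − t (i−1)) + b i ≥ 2 · b (i−1) for every i with 1 ≤ i ≤ I. Then ∑_{i=1}^{I} b (i−1) ≤ t I + b I. -/
/-- Let `I ∈ ℕ` and let `t, b : ℕ → ℕ` satisfy `t 0 = 0`,
`b 0 = 0`, `t` nondecreasing, and `(t i − t (i−1)) + b i ≥ 2 · b (i−1)` for every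
`i` with `1 ≤ i ≤ I`.  Then `∑_{i=1}^{I} b (i−1) ≤ t I + b I`.
(Subtraction on `ℕ` is truncated subtraction.) -/
theorem pencil_state_sum_bound (I : ℕ) (t b : ℕ → ℕ)
    (ht0 : t 0 = 0) (hb0 : b 0 = 0) (htmono : Monotone t)
    (hred : ∀ i, 1 ≤ i → i ≤ I → 2 * b (i - 1) ≤ (t i - t (i - 1)) + b i) :
    ∑ i ∈ Finset.Icc 1 I, b (i - 1) ≤ t I + b I := by
  induction I with
  | zero => simp [ht0, hb0]
  | succ n ih =>
    have hsum : ∑ i ∈ Finset.Icc 1 (n + 1), b (i - 1)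
        = (∑ i ∈ Finset.Icc 1 n, b (i - 1)) + b n := by
      rw [Finset.sum_Icc_succ_top (by omega)]; rfl
    have ihn := ih (fun i h1 h2 => hred i h1 (by omega))
    have hr := hred (n + 1) (by omega) le_rfl
    simp only [Nat.add_sub_cancel] at hr
    have hmono : t n ≤ t (n + 1) := htmono (Nat.le_succ n)
    rw [hsum]
    omega
end

section
/- Let I ∈ ℕ and let t, b : ℕ → ℕ satisfy t 0 = 0, b 0 = 0, t nondecreasing, and (t i − t (i−1)) + b i ≥ 2 · b (i−1) for every i with 1 ≤ i ≤ I. Then the total cost ∑_{i=1}^{I} ((t i − t (i−1)) + b i + 2) is at most 2 · t I + 2 · I + 2 · b I. -/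
/-- Let `I ∈ ℕ` and let `t, b : ℕ → ℕ` satisfy `t 0 = 0`,
`b 0 = 0`, `t` nondecreasing, and `(t i − t (i−1)) + b i ≥ 2 · b (i−1)` for every
`i` with `1 ≤ i ≤ I`.  Then the total cost
`∑_{i=1}^{I} ((t i − t (i−1)) + b i + 2)` is at most `2 · t I + 2 · I + 2 · b I`.
(Subtraction on `ℕ` is truncated subtraction.) -/
theorem pencil_total_token_bound (I : ℕ) (t b : ℕ → ℕ)
    (ht0 : t 0 = 0) (hb0 : b 0 = 0) (htmono : Monotone t)
    (hred : ∀ i, 1 ≤ i → i ≤ I → 2 * b (i - 1) ≤ (t i - t (i - 1)) + b i) :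
    ∑ i ∈ Finset.Icc 1 I, ((t i - t (i - 1)) + b i + 2) ≤
      2 * t I + 2 * I + 2 * b I := by
  induction I with
  | zero => simp [ht0, hb0]
  | succ n ih =>
    have h1 : ∑ i ∈ Finset.Icc 1 n, ((t i - t (i - 1)) + b i + 2) ≤
        2 * t n + 2 * n + 2 * b n :=
      ih (fun i h1 h2 => hred i h1 (h2.trans (Nat.le_succ n)))
    rw [Finset.sum_Icc_succ_top (Nat.one_le_iff_ne_zero.mpr (Nat.succ_ne_zero n))]
    have hr := hred (n + 1) (Nat.le_add_left 1 n) le_rfl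
    simp only [Nat.add_sub_cancel] at hr ⊢
    have ht : t n + (t (n + 1) - t n) = t (n + 1) :=
      Nat.add_sub_cancel' (htmono (Nat.le_succ n))
    omega
end

section
/- Let a : ℕ → ℕ, let I ≥ 1, and let t : ℕ → ℕ satisfy t 0 = 0 and, for each i with 1 ≤ i ≤ I, t i is the least natural number strictly greater than t (i−1) such that 2 · a (t i) < a (t (i−1)) + (t i − t (i−1)). Then for each i with 1 ≤ i ≤ I, a (t (i−1)) + (t i − t (i−1)) + a (t i) + 2 ≤ 3 · S + 3, where S = max_{0 ≤ k ≤ t i} a k. -/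
/-- Let `a : ℕ → ℕ`, let `I ≥ 1`, and let `t : ℕ → ℕ` satisfy
`t 0 = 0` and, for each `i` with `1 ≤ i ≤ I`, `t i` is the least natural number
strictly greater than `t (i−1)` such that
`2 · a (t i) < a (t (i−1)) + (t i − t (i−1))`.  Then for each `i` with
`1 ≤ i ≤ I`, `a (t (i−1)) + (t i − t (i−1)) + a (t i) + 2 ≤ 3 · S + 3`, where
`S = max_{0 ≤ k ≤ t i} a k`.
(Subtraction on `ℕ` is truncated subtraction.) -/
theorem pencil_space_bound (a : ℕ → ℕ) (I : ℕ) (hI : 1 ≤ I) (t : ℕ → ℕ)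
    (ht0 : t 0 = 0)
    (hleast : ∀ i, 1 ≤ i → i ≤ I →
      t (i - 1) < t i ∧
      2 * a (t i) < a (t (i - 1)) + (t i - t (i - 1)) ∧
      ∀ w, t (i - 1) < w → w < t i →
        ¬ (2 * a w < a (t (i - 1)) + (w - t (i - 1)))) :
    ∀ i, 1 ≤ i → i ≤ I →
      a (t (i - 1)) + (t i - t (i - 1)) + a (t i) + 2 ≤
        3 * ((Finset.Icc 0 (t i)).sup a) + 3 := by
  intro i hi1 hiI
  obtain ⟨hlt, h2, hmin⟩ := hleast i hi1 hiI
  set u := t (i - 1) with hu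
  set v := t i with hv
  set S := (Finset.Icc 0 v).sup a with hS
  have hmem : ∀ k, k ≤ v → a k ≤ S := fun k hk =>
    Finset.le_sup (Finset.mem_Icc.mpr ⟨Nat.zero_le k, hk⟩)
  have haU : a u ≤ S := hmem u hlt.le
  have haV : a v ≤ S := hmem v le_rfl
  rcases eq_or_lt_of_le (Nat.succ_le_of_lt hlt) with heq | hlt2
  · omega
  · have hm := hmin (v - 1) (by omega) (by omega)
    have hprev : a (v - 1) ≤ S := hmem _ (by omega)
    omega
end
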